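/- Let H be a subgroup of G and let ψ : H →* kˣ be a character of H. Then the ψ-eigenspace of W for the restricted action of H satisfies dim_k {w ∈ W | ρ(h) w = ψ(h) • w for all h ∈ H} = ∑_{χ : G →* kˣ, χ|_H = ψ} dim_k W_χ, the sum ranging over those characters χ of G whose restriction to H equals ψ. -/

import Mathlib

/-!
Every `ρ g` satisfies `(ρ g) ^ m = 1` for the exponent `m` of `G`, and `X ^ m - 1` splits into
distinct linear factors over `k`, so the commuting operators `ρ g` are simultaneously
diagonalizable and `W` is the direct sum of the eigenspaces `W_χ`. As `G` is commutative, the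
`ψ`-eigenspace `V` of `H` is `G`-stable, hence likewise the direct sum of the `V ⊓ W_χ`; and
`V ⊓ W_χ` is `W_χ` when `χ|_H = ψ` and `0` otherwise.
-/

open Module

/-- The `χ`-eigenspace of a representation `ρ` of `G` on `W`:
`W_χ = {w ∈ W | ρ(g) w = χ(g) • w for all g ∈ G}`. -/
def Representation.charSpace {k G W : Type*} [Field k] [Monoid G]
    [AddCommGroup W] [Module k W]
    (ρ : Representation k G W) (χ : G →* kˣ) : Submodule k W where
  carrier := {w : W | ∀ g : G, ρ g w = (χ g : k) • w}
  add_mem' := by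
    intro a b ha hb g
    simp [map_add, ha g, hb g, smul_add]
  zero_mem' := by
    intro g
    simp
  smul_mem' := by
    intro c w hw g
    simp only [map_smul, hw g]
    rw [smul_comm]

open Polynomial

namespace Module.End

variable {k U : Type*} [Field k] [AddCommGroup U] [Module k U]

lemma ker_aeval_prod_X_sub_C (f : End k U) (s : Finset k) :
    LinearMap.ker (aeval f (∏ μ ∈ s, (X - C μ))) = ⨆ μ ∈ s, f.eigenspace μ := by
  classical
  induction s using Finset.induction_on with
  | empty => simp [one_eq_id]
  | insert a s ha ih =>
    have hcop : IsCoprime (X - C a) (∏ μ ∈ s, (X - C μ)) :=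
      IsCoprime.prod_right fun b hb =>
        pairwise_coprime_X_sub_C Function.injective_id (ne_of_mem_of_not_mem hb ha).symm
    rw [Finset.prod_insert ha, ← sup_ker_aeval_eq_ker_aeval_mul_of_coprime f hcop, ih,
      Finset.iSup_insert, eigenspace_def]
    simp [algebraMap_end_eq_smul_id, one_eq_id]

variable {f : End k U} {m : ℕ} [NeZero m] {ζ : k}

lemma iSup_eigenspace_eq_top_of_pow_eq_one (hζ : IsPrimitiveRoot ζ m) (hf : f ^ m = 1) :
    ⨆ μ, f.eigenspace μ = ⊤ := by
  have hker : LinearMap.ker (aeval f (X ^ m - 1 : k[X])) = ⊤ := by simp [hf]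
  rw [X_pow_sub_one_eq_prod (NeZero.pos m) hζ, ker_aeval_prod_X_sub_C] at hker
  exact top_le_iff.mp (hker ▸ iSup₂_le fun μ _ => le_iSup f.eigenspace μ)

/-- A primitive `m`-th root of unity exists only if `m` is invertible in `k`, which makes
`X ^ m - 1` separable. -/
lemma isSemisimple_of_pow_eq_one (hζ : IsPrimitiveRoot ζ m) (hf : f ^ m = 1) :
    f.IsSemisimple := by
  have := hζ.neZero'
  refine isSemisimple_of_squarefree_aeval_eq_zero (p := X ^ m - 1) ?_ (by simp [hf])
  simpa using (separable_X_pow_sub_C (1 : k) (NeZero.ne _) one_ne_zero).squarefree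

lemma iSup_iInf_eigenspace_eq_top_of_pow_eq_one [FiniteDimensional k U] {ι : Type*}
    {f : ι → End k U} (hcomm : Pairwise fun i j => Commute (f i) (f j))
    (hζ : IsPrimitiveRoot ζ m) (hf : ∀ i, f i ^ m = 1) :
    ⨆ χ : ι → k, ⨅ i, (f i).eigenspace (χ i) = ⊤ := by
  have hgen (i : ι) (μ : k) : (f i).maxGenEigenspace μ = (f i).eigenspace μ :=
    (isSemisimple_of_pow_eq_one hζ (hf i)).isFinitelySemisimple.maxGenEigenspace_eq_eigenspace μ
  simpa only [hgen] using iSup_iInf_maxGenEigenspace_eq_top_of_iSup_maxGenEigenspace_eq_top_of_commute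
    f hcomm fun i => by simpa only [hgen] using iSup_eigenspace_eq_top_of_pow_eq_one hζ (hf i)

end Module.End

namespace Representation

variable {k G W : Type*} [Field k] [AddCommGroup W] [Module k W]

section Monoid

variable [Monoid G] (ρ : Representation k G W)

lemma mem_charSpace {χ : G →* kˣ} {w : W} :
    w ∈ ρ.charSpace χ ↔ ∀ g, ρ g w = (χ g : k) • w :=
  Iff.rfl

lemma charSpace_eq_iInf_eigenspace (χ : G →* kˣ) :
    ρ.charSpace χ = ⨅ g, End.eigenspace (ρ g) (χ g) := by
  ext w
  simp only [mem_charSpace, Submodule.mem_iInf, End.mem_eigenspace_iff]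

lemma disjoint_charSpace {χ₁ χ₂ : G →* kˣ} (h : χ₁ ≠ χ₂) :
    Disjoint (ρ.charSpace χ₁) (ρ.charSpace χ₂) := by
  obtain ⟨g, hg⟩ := DFunLike.ne_iff.mp h
  rw [charSpace_eq_iInf_eigenspace, charSpace_eq_iInf_eigenspace]
  exact (End.disjoint_genEigenspace (ρ g) (Units.val_injective.ne hg) 1 1).mono
    (iInf_le _ g) (iInf_le _ g)

lemma charSpace_le_charSpace_comp {H : Type*} [Monoid H] (φ : H →* G) (χ : G →* kˣ) :
    ρ.charSpace χ ≤ charSpace (ρ.comp φ) (χ.comp φ) :=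
  fun _ hw h => hw (φ h)

lemma map_subtype_charSpace_toRepresentation (σ : Subrepresentation ρ) (χ : G →* kˣ) :
    (σ.toRepresentation.charSpace χ).map σ.toSubmodule.subtype =
      σ.toSubmodule ⊓ ρ.charSpace χ := by
  ext w
  constructor
  · rintro ⟨v, hv, rfl⟩
    exact ⟨v.2, fun g => congrArg Subtype.val (hv g)⟩
  · rintro ⟨hwσ, hwχ⟩
    exact ⟨⟨w, hwσ⟩, fun g => Subtype.ext (hwχ g), rfl⟩

end Monoid

section CommMonoid

variable [CommMonoid G] (ρ : Representation k G W)

lemma commute_apply (g h : G) : Commute (ρ g) (ρ h) := by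
  rw [Commute, SemiconjBy, ← map_mul, ← map_mul, mul_comm]

def charSpaceCompSubrepresentation {H : Type*} [Monoid H] (φ : H →* G) (ψ : H →* kˣ) :
    Subrepresentation ρ where
  toSubmodule := charSpace (ρ.comp φ) ψ
  apply_mem_toSubmodule g w hw h := by
    change ρ (φ h) (ρ g w) = (ψ h : k) • ρ g w
    have hwh : ρ (φ h) w = (ψ h : k) • w := hw h
    rw [← End.mul_apply, (ρ.commute_apply _ g).eq, End.mul_apply, hwh, map_smul]

@[simp]
lemma charSpaceCompSubrepresentation_toSubmodule {H : Type*} [Monoid H] (φ : H →* G)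
    (ψ : H →* kˣ) :
    (ρ.charSpaceCompSubrepresentation φ ψ).toSubmodule = charSpace (ρ.comp φ) ψ :=
  rfl

lemma iSupIndep_charSpace : iSupIndep ρ.charSpace := by
  have hindep := End.independent_iInf_maxGenEigenspace_of_forall_mapsTo ρ
    fun g g' => End.mapsTo_maxGenEigenspace_of_comm (ρ.commute_apply g' g)
  refine (hindep.comp fun χ₁ χ₂ h => MonoidHom.ext fun g => Units.ext (congrFun h g)).mono
    fun χ => ?_
  rw [charSpace_eq_iInf_eigenspace]
  exact iInf_mono fun g => End.eigenspace_le_maxGenEigenspace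

end CommMonoid

section Group

variable [Group G] (ρ : Representation k G W)

/-- A nonzero simultaneous eigenvector forces the eigenvalues to be multiplicative in `g`. -/
lemma iInf_eigenspace_le_iSup_charSpace (f : G → k) :
    ⨅ g, End.eigenspace (ρ g) (f g) ≤ ⨆ χ : G →* kˣ, ρ.charSpace χ := by
  by_cases hbot : ⨅ g, End.eigenspace (ρ g) (f g) = ⊥
  · simp [hbot]
  obtain ⟨w, hw, hw0⟩ := Submodule.exists_mem_ne_zero_of_ne_bot hbot
  have hwf (g : G) : ρ g w = f g • w :=
    End.mem_eigenspace_iff.mp (Submodule.mem_iInf _ |>.mp hw g)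
  have hcancel : Function.Injective (· • w : k → W) := smul_left_injective k hw0
  let χ : G →* k :=
    { toFun := f
      map_one' := hcancel <| by simp only [← hwf, map_one, End.one_apply, one_smul]
      map_mul' g h := hcancel <| by
        change f (g * h) • w = (f g * f h) • w
        rw [← hwf, map_mul, End.mul_apply, hwf, map_smul, hwf, smul_smul, mul_comm] }
  have hχ : ⨅ g, End.eigenspace (ρ g) (f g) = ρ.charSpace χ.toHomUnits := by
    simp only [charSpace_eq_iInf_eigenspace, MonoidHom.coe_toHomUnits]
    rfl
  exact hχ ▸ le_iSup ρ.charSpace χ.toHomUnits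

end Group

section FiniteCommGroup

variable [CommGroup G] [Finite G] [FiniteDimensional k W] (ρ : Representation k G W) {ζ : k}

lemma iSup_charSpace_eq_top (hζ : IsPrimitiveRoot ζ (Monoid.exponent G)) :
    ⨆ χ : G →* kˣ, ρ.charSpace χ = ⊤ := by
  have htop := End.iSup_iInf_eigenspace_eq_top_of_pow_eq_one (f := ρ)
    (fun g h _ => ρ.commute_apply g h) hζ
    fun g => by rw [← map_pow, Monoid.pow_exponent_eq_one, map_one]
  exact top_le_iff.mp (htop ▸ iSup_le ρ.iInf_eigenspace_le_iSup_charSpace)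

lemma finrank_eq_finsum_finrank_charSpace (hζ : IsPrimitiveRoot ζ (Monoid.exponent G)) :
    finrank k W = ∑ᶠ χ : G →* kˣ, finrank k (ρ.charSpace χ) := by
  classical
  have := Fintype.ofFinite (G →* kˣ)
  have hint := DirectSum.isInternal_submodule_of_iSupIndep_of_iSup_eq_top
    ρ.iSupIndep_charSpace (ρ.iSup_charSpace_eq_top hζ)
  rw [finsum_eq_sum_of_fintype, ← finrank_directSum]
  exact (LinearEquiv.ofBijective (DirectSum.coeLinearMap _) hint).finrank_eq.symm

lemma finrank_subrepresentation_eq_finsum_finrank_inf_charSpace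
    (hζ : IsPrimitiveRoot ζ (Monoid.exponent G)) (σ : Subrepresentation ρ) :
    finrank k σ.toSubmodule = ∑ᶠ χ : G →* kˣ, finrank k ↥(σ.toSubmodule ⊓ ρ.charSpace χ) := by
  rw [σ.toRepresentation.finrank_eq_finsum_finrank_charSpace hζ]
  refine finsum_congr fun χ => ?_
  rw [← map_subtype_charSpace_toRepresentation, Submodule.finrank_map_subtype_eq]

end FiniteCommGroup

end Representation

theorem finrank_restricted_charSpace_eq_sum_general
    {k : Type*} [Field k]
    {G : Type*} [CommGroup G] [Fintype G]
    {W : Type*} [AddCommGroup W] [Module k W] [FiniteDimensional k W]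
    (hζ : ∃ ζ : k, IsPrimitiveRoot ζ (Monoid.exponent G))
    (ρ : Representation k G W) (H : Subgroup G) (ψ : ↥H →* kˣ) :
    finrank k (Representation.charSpace (MonoidHom.comp ρ H.subtype) ψ)
      = ∑ᶠ χ ∈ {χ : G →* kˣ | MonoidHom.comp χ H.subtype = ψ},
          finrank k (ρ.charSpace χ) := by
  classical
  obtain ⟨ζ, hζ⟩ := hζ
  refine (ρ.finrank_subrepresentation_eq_finsum_finrank_inf_charSpace hζ
    (ρ.charSpaceCompSubrepresentation H.subtype ψ)).trans ?_
  rw [Representation.charSpaceCompSubrepresentation_toSubmodule, finsum_mem_def]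
  refine finsum_congr fun χ => ?_
  have hle := ρ.charSpace_le_charSpace_comp H.subtype χ
  rw [Set.indicator_apply]
  split_ifs with hχ
  · rw [inf_eq_right.mpr (hχ ▸ hle)]
  · rw [((Representation.disjoint_charSpace _ (Ne.symm hχ)).mono_right hle).eq_bot, finrank_bot]

/-- For a subgroup `H ≤ G` and a character `ψ : H →* kˣ`, the `ψ`-eigenspace of `W` for
the restricted action of `H` satisfies
`dim_k {w ∈ W | ρ(h) w = ψ(h) • w for all h ∈ H} = ∑_{χ : G →* kˣ, χ|_H = ψ} dim_k W_χ`. -/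
theorem finrank_restricted_charSpace_eq_sum
    {k : Type*} [Field k] [CharZero k]
    {G : Type*} [CommGroup G] [Fintype G]
    {W : Type*} [AddCommGroup W] [Module k W] [FiniteDimensional k W]
    (hζ : ∃ ζ : k, IsPrimitiveRoot ζ (Monoid.exponent G))
    (ρ : Representation k G W) (H : Subgroup G) (ψ : ↥H →* kˣ) :
    finrank k (Representation.charSpace (MonoidHom.comp ρ H.subtype) ψ)
      = ∑ᶠ χ ∈ {χ : G →* kˣ | MonoidHom.comp χ H.subtype = ψ},
          finrank k (ρ.charSpace χ) :=
  finrank_restricted_charSpace_eq_sum_general hζ ρ H ψ
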